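/- For the learning rate sequence α_t = (H+1)/(H+t) with H ≥ 1 and weights α_t^i := α_i ∏_{j=i+1}^t (1-α_j), for every t ≥ 1, the sum of squares satisfies ∑_{i=1}^t (α_t^i)^2 ≤ 2H/t. -/
import Mathlib


/-- Learning rate `α_t = (H+1)/(H+t)`. -/
noncomputable def lr (H t : ℕ) : ℝ := (H + 1) / (H + t)

/-- Weight `α_t^i = α_i ∏_{j=i+1}^t (1 - α_j)`. -/
noncomputable def lrW (H t i : ℕ) : ℝ :=
  lr H i * ∏ j ∈ Finset.Icc (i + 1) t, (1 - lr H j)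

lemma lr_nonneg (H i : ℕ) : 0 ≤ lr H i := by
  unfold lr; positivity

lemma lr_le_one (H i : ℕ) (hi : 1 ≤ i) : lr H i ≤ 1 := by
  unfold lr
  rw [div_le_one (by positivity)]
  have : (1:ℝ) ≤ i := by exact_mod_cast hi
  linarith

lemma lrW_nonneg (H t i : ℕ) : 0 ≤ lrW H t i := by
  unfold lrW
  apply mul_nonneg (lr_nonneg H i)
  apply Finset.prod_nonneg
  intro j hj
  have hj1 : 1 ≤ j := by
    have := (Finset.mem_Icc.mp hj).1; omega
  linarith [lr_le_one H j hj1]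

lemma lrW_top (H t : ℕ) : lrW H t t = lr H t := by
  unfold lrW
  rw [Finset.Icc_eq_empty (by omega), Finset.prod_empty, mul_one]

lemma lrW_succ (H t i : ℕ) (h : i ≤ t) :
    lrW H (t+1) i = lrW H t i * (1 - lr H (t+1)) := by
  unfold lrW
  rw [Finset.prod_Icc_succ_top (by omega), mul_assoc]

lemma lr_one (H : ℕ) : lr H 1 = 1 := by
  unfold lr
  rw [Nat.cast_one, div_self (by positivity)]

lemma sum_lrW (H : ℕ) : ∀ t, 1 ≤ t → ∑ i ∈ Finset.Icc 1 t, lrW H t i = 1 := by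
  intro t
  induction t with
  | zero => omega
  | succ s ih =>
    intro _
    by_cases hs : s = 0
    · subst hs
      simp [lrW_top, lr_one]
    · have hs1 : 1 ≤ s := by omega
      rw [Finset.sum_Icc_succ_top (by omega), lrW_top]
      have hcong : ∀ i ∈ Finset.Icc 1 s,
          lrW H (s+1) i = lrW H s i * (1 - lr H (s+1)) := by
        intro i hi
        exact lrW_succ H s i (Finset.mem_Icc.mp hi).2
      rw [Finset.sum_congr rfl hcong, ← Finset.sum_mul, ih hs1, one_mul]
      ring

lemma one_sub_lr_succ (H s : ℕ) :
    1 - lr H (s+1) = (s : ℝ) / (H + s + 1) := by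
  unfold lr
  have h : ((H:ℝ) + s + 1) ≠ 0 := by positivity
  push_cast
  rw [show ((H:ℝ) + ((s:ℝ) + 1)) = (H:ℝ) + s + 1 from by ring,
    eq_div_iff h, sub_mul, one_mul, div_mul_cancel₀ _ h]
  ring

lemma lrW_le (H : ℕ) (hH : 1 ≤ H) :
    ∀ t, ∀ i, 1 ≤ i → i ≤ t → lrW H t i ≤ 2 * (H:ℝ) / t := by
  intro t
  induction t with
  | zero => intro i h1 h2; omega
  | succ s ih =>
    intro i h1 h2
    have hH' : (1:ℝ) ≤ H := by exact_mod_cast hH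
    have hs0 : (0:ℝ) ≤ s := by positivity
    by_cases hi : i = s + 1
    · subst hi
      rw [lrW_top]
      unfold lr
      rw [div_le_div_iff₀ (by positivity) (by positivity)]
      push_cast
      nlinarith
    · have his : i ≤ s := by omega
      have hs1 : (1:ℝ) ≤ s := by
        have : 1 ≤ s := by omega
        exact_mod_cast this
      rw [lrW_succ H s i his, one_sub_lr_succ]
      have hb := ih i h1 his
      have hnn : (0:ℝ) ≤ (s : ℝ) / (H + s + 1) := by positivity
      calc lrW H s i * ((s : ℝ) / (H + s + 1))
          ≤ (2 * (H:ℝ) / s) * ((s : ℝ) / (H + s + 1)) :=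
            mul_le_mul_of_nonneg_right hb hnn
        _ = 2 * (H:ℝ) / ((H:ℝ) + s + 1) := by
            field_simp
        _ ≤ 2 * (H:ℝ) / ((s:ℝ) + 1) := by
            apply div_le_div_of_nonneg_left (by linarith) (by linarith) (by linarith)
        _ = 2 * (H:ℝ) / ((s+1 : ℕ) : ℝ) := by push_cast; ring

theorem stmt3 (H : ℕ) (hH : 1 ≤ H) (t : ℕ) (ht : 1 ≤ t) :
    ∑ i ∈ Finset.Icc 1 t, (lrW H t i) ^ 2 ≤ 2 * (H : ℝ) / t := by
  calc ∑ i ∈ Finset.Icc 1 t, (lrW H t i) ^ 2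
      ≤ ∑ i ∈ Finset.Icc 1 t, lrW H t i * (2 * (H:ℝ) / t) := by
        apply Finset.sum_le_sum
        intro i hi
        obtain ⟨h1, h2⟩ := Finset.mem_Icc.mp hi
        rw [sq]
        exact mul_le_mul_of_nonneg_left (lrW_le H hH t i h1 h2) (lrW_nonneg H t i)
    _ = (∑ i ∈ Finset.Icc 1 t, lrW H t i) * (2 * (H:ℝ) / t) := by
        rw [Finset.sum_mul]
    _ = 2 * (H:ℝ) / t := by rw [sum_lrW H t ht, one_mul]
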